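/- arXiv:1004.0727 — 3 statements merged into one kernel-verified Lean document; each statement's English description precedes it below -/
import Mathlib

section
/- Let F be a finite field and let c, k, d be natural numbers with 2 ≤ c ≤ k < d and |F| ≥ C(d−1, c−1). Suppose φ₁, …, φ_k are vectors in F^c such that every c of them are linearly independent (hence form a basis of F^c). Then there exists a vector φ ∈ F^c such that every c vectors among φ₁, …, φ_k, φ are linearly independent. -/
/-!
A vector `v` works as soon as it avoids the span of every `c - 1` of the `φᵢ`: a `c`-subfamily
of `φ₁, …, φ_k, v` containing `v` is then independent because the other `c - 1` vectors are.
There are `C(k, c-1) ≤ C(d-1, c-1) ≤ q` such spans, all proper subspaces of `F^c`, and `q` proper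
subspaces of a finite vector space cannot cover it: each has at most `|V| / q` elements, so
together with `0` they contain at most `1 + q (|V| / q - 1) < |V|` vectors.
-/

open Module Submodule

section

variable {F V : Type*} [Field F] [AddCommGroup V] [Module F V]

theorem Submodule.natCard_mul_natCard_le_of_ne_top [Finite F] [Module.Finite F V]
    {p : Submodule F V} (hp : p ≠ ⊤) : Nat.card p * Nat.card F ≤ Nat.card V := by
  rw [natCard_eq_pow_finrank (K := F), natCard_eq_pow_finrank (K := F) (V := V), ← pow_succ]
  exact Nat.pow_le_pow_right Finite.card_pos (finrank_lt hp)

theorem Submodule.exists_forall_notMem_of_card_le [Finite F] [Module.Finite F V]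
    {ι : Type*} [Fintype ι] (p : ι → Submodule F V) (hp : ∀ i, p i ≠ ⊤)
    (hι : Fintype.card ι ≤ Nat.card F) : ∃ v, ∀ i, v ∉ p i := by
  rcases isEmpty_or_nonempty ι with _ | ⟨⟨i₀⟩⟩
  · exact ⟨0, isEmptyElim⟩
  have : Finite V := Module.finite_of_finite F
  by_contra! hcover
  set q := Nat.card F
  set N := Nat.card V
  have hq : 1 < q := Finite.one_lt_card
  have hpN (i : ι) : Nat.card (p i) * q ≤ N := natCard_mul_natCard_le_of_ne_top (hp i)
  have hN : N ≤ ∑ i, (Nat.card (p i) - 1) + 1 := by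
    have hsub : (Set.univ : Set V) ⊆ insert 0 (⋃ i, (p i : Set V) \ {0}) := by
      intro v _
      by_cases hv : v = 0
      · exact Or.inl hv
      · obtain ⟨i, hi⟩ := hcover v
        exact Or.inr (Set.mem_iUnion.2 ⟨i, hi, hv⟩)
    calc N = (Set.univ : Set V).ncard := (Set.ncard_univ V).symm
      _ ≤ (⋃ i, (p i : Set V) \ {0}).ncard + 1 :=
        (Set.ncard_le_ncard hsub).trans (Set.ncard_insert_le _ _)
      _ ≤ ∑ i, ((p i : Set V) \ {0}).ncard + 1 := by
        gcongr; exact Set.ncard_iUnion_le_of_fintype _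
      _ = ∑ i, (Nat.card (p i) - 1) + 1 := by
        simp only [Set.ncard_sdiff_singleton_of_mem (zero_mem _), ← Nat.card_coe_set_eq]; rfl
  have hsum : (∑ i, (Nat.card (p i) - 1)) * q ≤ (N - q) * q := by
    calc (∑ i, (Nat.card (p i) - 1)) * q = ∑ i, (Nat.card (p i) * q - q) := by
          rw [Finset.sum_mul]; simp only [Nat.sub_mul, one_mul]
      _ ≤ ∑ _i : ι, (N - q) := Finset.sum_le_sum fun i _ => Nat.sub_le_sub_right (hpN i) q
      _ = Fintype.card ι * (N - q) := by simp
      _ ≤ (N - q) * q := by rw [mul_comm]; exact Nat.mul_le_mul_left _ hι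
  have hqN : q ≤ N := le_trans (Nat.le_mul_of_pos_left q Nat.card_pos) (hpN i₀)
  have := Nat.le_of_mul_le_mul_right hsum (by omega)
  omega

theorem span_image_ne_top_of_card_lt [FiniteDimensional F V] {ι : Type*} (f : ι → V)
    {t : Finset ι} (ht : t.card < finrank F V) : span F (f '' t) ≠ ⊤ := by
  classical
  rw [← Finset.coe_image]
  refine (span_lt_top_of_card_lt_finrank ?_).ne
  simpa using Finset.card_image_le.trans_lt ht

theorem linearIndepOn_of_card_le {ι : Type*} [Fintype ι] {f : ι → V} {c : ℕ}
    (hc : c ≤ Fintype.card ι) (hf : ∀ s : Finset ι, s.card = c → LinearIndepOn F f s)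
    {t : Finset ι} (ht : t.card ≤ c) : LinearIndepOn F f t := by
  obtain ⟨s, hts, -, hs⟩ := Finset.exists_subsuperset_card_eq (Finset.subset_univ t) ht
    (by rwa [Finset.card_univ])
  exact (hf s hs).mono (Finset.coe_subset.2 hts)

theorem notMem_span_image_of_card_le {ι : Type*} [Fintype ι] {f : ι → V} {v : V} {c : ℕ}
    (hc : c ≤ Fintype.card ι) (hv : ∀ s : Finset ι, s.card = c → v ∉ span F (f '' s))
    {t : Finset ι} (ht : t.card ≤ c) : v ∉ span F (f '' t) := by
  obtain ⟨s, hts, -, hs⟩ := Finset.exists_subsuperset_card_eq (Finset.subset_univ t) ht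
    (by rwa [Finset.card_univ])
  exact fun hvt => hv s hs (span_mono (Set.image_mono (Finset.coe_subset.2 hts)) hvt)

theorem Fin.image_castSucc_preimage_castSucc {k : ℕ} (s : Set (Fin (k + 1))) :
    Fin.castSucc '' (Fin.castSucc ⁻¹' s) = s \ {Fin.last k} := by
  rw [Set.image_preimage_eq_inter_range]
  ext i
  simp only [Set.mem_inter_iff, Set.mem_range, Fin.exists_castSucc_eq, Set.mem_sdiff,
    Set.mem_singleton_iff]

theorem Fin.card_preimage_castSucc {k : ℕ} (s : Finset (Fin (k + 1))) :
    (s.preimage Fin.castSucc (Fin.castSucc_injective k).injOn).card =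
      (s.erase (Fin.last k)).card := by
  rw [← Finset.card_image_of_injective _ (Fin.castSucc_injective k)]
  congr 1
  apply Finset.coe_injective
  push_cast
  exact Fin.image_castSucc_preimage_castSucc _

theorem linearIndepOn_snoc_iff {k : ℕ} {φ : Fin k → V} {v : V} {s : Set (Fin (k + 1))} :
    LinearIndepOn F (Fin.snoc φ v : Fin (k + 1) → V) s ↔
      LinearIndepOn F φ (Fin.castSucc ⁻¹' s) ∧
        (Fin.last k ∈ s → v ∉ span F (φ '' (Fin.castSucc ⁻¹' s))) := by
  set t := Fin.castSucc ⁻¹' s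
  have hcomp : LinearIndepOn F (Fin.snoc φ v : Fin (k + 1) → V) (Fin.castSucc '' t) ↔
      LinearIndepOn F φ t :=
    ⟨fun h => by simpa using h.comp_of_image (Fin.castSucc_injective k).injOn,
      fun h => LinearIndepOn.image_of_comp _ _ (by simpa using h)⟩
  by_cases hlast : Fin.last k ∈ s
  · have himg : (Fin.snoc φ v : Fin (k + 1) → V) '' (Fin.castSucc '' t) = φ '' t := by
      rw [Set.image_image]; simp
    rw [← Set.insert_eq_of_mem hlast, ← Set.insert_sdiff_singleton,
      ← Fin.image_castSucc_preimage_castSucc, linearIndepOn_insert (by simp), hcomp, himg,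
      Fin.snoc_last]
    simp
  · rw [← Set.sdiff_singleton_eq_self hlast, ← Fin.image_castSucc_preimage_castSucc, hcomp]
    simp

end

/-- Let `F` be a finite field and `c, k, d` natural numbers with
`2 ≤ c ≤ k < d` and `|F| ≥ C(d−1, c−1)`. Suppose `φ₁, …, φ_k ∈ F^c` are such that every
`c` of them are linearly independent (hence form a basis of `F^c`). Then there exists a
vector `φ ∈ F^c` such that every `c` vectors among `φ₁, …, φ_k, φ` are linearly
independent. -/
theorem exists_vector_extending_generic_family
    (F : Type*) [Field F] [Fintype F]
    (c k d : ℕ) (hc : 2 ≤ c) (hck : c ≤ k) (hkd : k < d)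
    (hF : Nat.choose (d - 1) (c - 1) ≤ Fintype.card F)
    (φ : Fin k → (Fin c → F))
    (hφ : ∀ s : Finset (Fin k), s.card = c →
        LinearIndependent F (fun i : s => φ i.1)) :
    ∃ v : Fin c → F, ∀ s : Finset (Fin (k + 1)), s.card = c →
        LinearIndependent F (fun i : s => (Fin.snoc φ v : Fin (k + 1) → Fin c → F) i.1) := by
  obtain ⟨n, rfl⟩ : ∃ n, c = n + 1 := ⟨c - 1, by omega⟩
  obtain ⟨v, hv⟩ := exists_forall_notMem_of_card_le
    (fun t : {t : Finset (Fin k) // t.card = n} => span F (φ '' t.1))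
    (fun t => span_image_ne_top_of_card_lt φ (by simp [t.2])) <| by
      rw [Fintype.card_finset_len, Fintype.card_fin, Nat.card_eq_fintype_card]
      exact (Nat.choose_le_choose n (by omega)).trans hF
  refine ⟨v, fun s hs => linearIndepOn_snoc_iff.2 ?_⟩
  have ht := Fin.card_preimage_castSucc s
  rw [← Finset.coe_preimage s (Fin.castSucc_injective k).injOn]
  refine ⟨linearIndepOn_of_card_le (by rwa [Fintype.card_fin]) hφ ?_, fun hlast => ?_⟩
  · exact ht ▸ hs ▸ Finset.card_erase_le
  · rw [Finset.card_erase_of_mem hlast, hs, Nat.add_sub_cancel] at ht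
    exact notMem_span_image_of_card_le (by rw [Fintype.card_fin]; omega) (fun t htn => hv ⟨t, htn⟩)
      ht.le
end

section
/- Let F be a finite field and let c, d be natural numbers with 2 ≤ c ≤ d and |F| ≥ C(d−1, c−1). Then there exist vectors φ₁, …, φ_d in F^c such that every c of them are linearly independent, i.e., every c-element subfamily forms a basis of F^c. -/
/-! The rows of a Vandermonde matrix built from pairwise distinct points of the projective
line over `F` are in general position: every `c × c` minor is a projective Vandermonde
determinant `∏ (v j * w i - v i * w j)`, which vanishes only if two of the points coincide.
The projective line has `|F| + 1` points, and for `2 ≤ c < d` the hypothesis gives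
`d - 1 ≤ C(d - 1, c - 1) ≤ |F|`. When `d ≤ c` distinct standard basis vectors suffice. -/

open Matrix

theorem Nat.self_le_choose {n k : ℕ} (hk : 0 < k) (hkn : k < n) : n ≤ n.choose k := by
  induction n generalizing k with
  | zero => omega
  | succ m ih =>
    obtain rfl | hkm := Nat.lt_succ_iff_lt_or_eq.mp hkn |>.symm
    · rw [Nat.choose_succ_self_right]
    obtain ⟨k, rfl⟩ := Nat.exists_eq_succ_of_ne_zero hk.ne'
    rw [Nat.choose_succ_succ]
    have := ih k.succ_pos hkm
    have := Nat.choose_pos (show k ≤ m by omega)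
    omega

theorem Matrix.linearIndependent_rectVandermonde {K α : Type*} [Field K] [Fintype α] {n : ℕ}
    (hα : Fintype.card α = n) {v w : α → K} (hvw : Pairwise fun i j ↦ v j * w i ≠ v i * w j) :
    LinearIndependent K (rectVandermonde v w n).row := by
  let e : Fin n ≃ α := (Fintype.equivFinOfCardEq hα).symm
  rw [← linearIndependent_equiv e]
  change LinearIndependent K (projVandermonde (v ∘ e) (w ∘ e)).row
  rw [linearIndependent_rows_iff_isUnit, isUnit_iff_isUnit_det, det_projVandermonde]
  refine (Finset.prod_ne_zero_iff.mpr fun i _ ↦ Finset.prod_ne_zero_iff.mpr fun j hj ↦ ?_).isUnit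
  exact sub_ne_zero.mpr (hvw (e.injective.ne (Finset.mem_Ioi.mp hj).ne))

/-- `none` is the point at infinity `(1 : 0)`. -/
def projectiveLineCoords {K : Type*} [Field K] (a : Option K) : K × K :=
  a.elim (1, 0) fun x ↦ (x, 1)

theorem pairwise_projectiveLineCoords_cross_ne (K : Type*) [Field K] :
    Pairwise fun a b : Option K ↦
      (projectiveLineCoords b).1 * (projectiveLineCoords a).2 ≠
        (projectiveLineCoords a).1 * (projectiveLineCoords b).2 := by
  rintro (_ | x) (_ | y) hab <;> simp_all [projectiveLineCoords, eq_comm]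

theorem exists_generic_family_of_le_card_add_one (F : Type*) [Field F] [Fintype F]
    (c d : ℕ) (hd : d ≤ Fintype.card F + 1) :
    ∃ φ : Fin d → (Fin c → F), ∀ s : Finset (Fin d), s.card = c →
        LinearIndependent F (fun i : s ↦ φ i.1) := by
  obtain ⟨ι⟩ : Nonempty (Fin d ↪ Option F) :=
    Function.Embedding.nonempty_of_card_le (by simpa using hd)
  let p : Fin d → F × F := projectiveLineCoords ∘ ι
  refine ⟨(rectVandermonde (fun i ↦ (p i).1) (fun i ↦ (p i).2) c).row, fun s hs ↦ ?_⟩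
  refine linearIndependent_rectVandermonde (by simpa using hs) fun i j hij ↦ ?_
  exact pairwise_projectiveLineCoords_cross_ne F (ι.injective.ne (Subtype.val_injective.ne hij))

theorem exists_generic_family_of_vectors_general
    (F : Type*) [Field F] [Fintype F]
    (c d : ℕ) (hc : 2 ≤ c)
    (hF : Nat.choose (d - 1) (c - 1) ≤ Fintype.card F) :
    ∃ φ : Fin d → (Fin c → F), ∀ s : Finset (Fin d), s.card = c →
        LinearIndependent F (fun i : s => φ i.1) := by
  by_cases hdc : d ≤ c
  · refine ⟨fun i ↦ Pi.single (Fin.castLE hdc i) 1, fun s _ ↦ ?_⟩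
    exact ((Pi.linearIndependent_single_one (Fin c) F).comp _ (Fin.castLE_injective hdc)).comp _
      Subtype.val_injective
  · have hchoose : d - 1 ≤ (d - 1).choose (c - 1) := Nat.self_le_choose (by omega) (by omega)
    exact exists_generic_family_of_le_card_add_one F c d (by omega)

/-- Let `F` be a finite field and `c, d` natural numbers with
`2 ≤ c ≤ d` and `|F| ≥ C(d−1, c−1)`. Then there exist vectors `φ₁, …, φ_d ∈ F^c`
such that every `c` of them are linearly independent, i.e. every `c`-element
subfamily forms a basis of `F^c`. -/
theorem exists_generic_family_of_vectors
    (F : Type*) [Field F] [Fintype F]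
    (c d : ℕ) (hc : 2 ≤ c) (hcd : c ≤ d)
    (hF : Nat.choose (d - 1) (c - 1) ≤ Fintype.card F) :
    ∃ φ : Fin d → (Fin c → F), ∀ s : Finset (Fin d), s.card = c →
        LinearIndependent F (fun i : s => φ i.1) :=
  exists_generic_family_of_vectors_general F c d hc hF
end

section
/- Let F be a finite field and let c, d be natural numbers with c ≤ d and |F| ≥ C(d−1, c−1). Then the uniform matroid U_{c,d} is representable over F: there exist vectors φ₁, …, φ_d in F^c such that for every subset X ⊆ {1, …, d}, the family (φ_i)_{i ∈ X} is linearly independent over F if and only if |X| ≤ c. -/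
open Finset in
/-- Greedy construction: vectors over `ℕ` indices whose first `k` members have all
small subfamilies linearly independent. -/
theorem uniform_greedy
    (F : Type*) [Field F] [Fintype F]
    (c d : ℕ) (hc : 1 ≤ c) (hcd : c ≤ d)
    (hF : Nat.choose (d - 1) (c - 1) ≤ Fintype.card F) :
    ∀ k : ℕ, k ≤ d → ∃ φ : ℕ → (Fin c → F), ∀ X : Finset ℕ,
      X ⊆ Finset.range k → X.card ≤ c → LinearIndependent F (fun i : X => φ i) := by
  classical
  set q := Fintype.card F with hqdef
  have hq2 : 2 ≤ q := Fintype.one_lt_card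
  intro k
  induction k with
  | zero =>
    intro _
    refine ⟨fun _ => 0, fun X hX _ => ?_⟩
    have hXe : X = ∅ := by simpa [Finset.subset_empty] using hX
    subst hXe
    haveI : IsEmpty ((∅ : Finset ℕ) : Type) := by
      constructor; rintro ⟨x, hx⟩; simp at hx
    exact linearIndependent_empty_type
  | succ k ih =>
    intro hk1
    obtain ⟨φ, hφ⟩ := ih (Nat.le_of_succ_le hk1)
    set m := min (c - 1) k with hm
    -- bad set of vectors
    set bad : Finset (Fin c → F) :=
      {0} ∪ ((Finset.range k).powersetCard m).biUnion
        (fun X => (Finset.univ.filter (· ∈ Submodule.span F (φ '' ↑X))).erase 0) with hbad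
    have hcardspan : ∀ X : Finset ℕ, X.card ≤ c - 1 →
        (Finset.univ.filter (· ∈ Submodule.span F (φ '' (↑X : Set ℕ)))).card ≤ q ^ (c - 1) := by
      intro X hX
      have h1 : (Finset.univ.filter (· ∈ Submodule.span F (φ '' (↑X : Set ℕ)))).card
          = Fintype.card (Submodule.span F (φ '' (↑X : Set ℕ))) := by
        rw [Fintype.card_subtype]
      have h2 : Fintype.card (Submodule.span F (φ '' (↑X : Set ℕ)))
          = q ^ Module.finrank F (Submodule.span F (φ '' (↑X : Set ℕ))) :=
        Module.card_eq_pow_finrank (K := F)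
      have h3 : Module.finrank F (Submodule.span F (φ '' (↑X : Set ℕ))) ≤ c - 1 := by
        have h4 := finrank_span_finset_le_card (R := F) (X.image φ)
        rw [Set.finrank, Finset.coe_image] at h4
        exact le_trans h4 (le_trans (Finset.card_image_le) hX)
      rw [h1, h2]
      exact Nat.pow_le_pow_right (by omega) h3
    have hNq : ((Finset.range k).powersetCard m).card ≤ q := by
      rw [Finset.card_powersetCard, Finset.card_range]
      rcases le_or_gt (c - 1) k with h | h
      · rw [hm, min_eq_left h]
        exact le_trans (Nat.choose_le_choose _ (by omega : k ≤ d - 1)) hF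
      · rw [hm, min_eq_right (le_of_lt h), Nat.choose_self]; omega
    have hbadcard : bad.card < Fintype.card (Fin c → F) := by
      have hQ1 : 1 ≤ q ^ (c - 1) := Nat.one_le_pow _ _ (by omega)
      have herase : ∀ X ∈ (Finset.range k).powersetCard m,
          ((Finset.univ.filter (· ∈ Submodule.span F (φ '' (↑X : Set ℕ)))).erase 0).card
            ≤ q ^ (c - 1) - 1 := by
        intro X hX
        have hXc : X.card ≤ c - 1 := by
          have h1 := (Finset.mem_powersetCard.mp hX).2
          have h2 : m ≤ c - 1 := min_le_left _ _
          omega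
        have h0 : (0 : Fin c → F) ∈
            Finset.univ.filter (· ∈ Submodule.span F (φ '' (↑X : Set ℕ))) := by
          simp [Submodule.zero_mem]
        rw [Finset.card_erase_of_mem h0]
        have := hcardspan X hXc
        omega
      have hb1 : bad.card ≤ 1 + ((Finset.range k).powersetCard m).card * (q ^ (c - 1) - 1) := by
        refine le_trans (Finset.card_union_le _ _) ?_
        refine Nat.add_le_add (by simp) ?_
        refine le_trans (Finset.card_biUnion_le) ?_
        have := Finset.sum_le_card_nsmul ((Finset.range k).powersetCard m)
          (fun X => ((Finset.univ.filter
            (· ∈ Submodule.span F (φ '' (↑X : Set ℕ)))).erase 0).card)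
          (q ^ (c - 1) - 1) herase
        simpa [smul_eq_mul] using this
      have h5 : ((Finset.range k).powersetCard m).card * (q ^ (c - 1) - 1)
          ≤ q * (q ^ (c - 1) - 1) := Nat.mul_le_mul_right _ hNq
      have h6 : q * (q ^ (c - 1) - 1) + q = q * q ^ (c - 1) := by
        have h7 : q ^ (c - 1) - 1 + 1 = q ^ (c - 1) := by omega
        calc q * (q ^ (c - 1) - 1) + q = q * ((q ^ (c - 1) - 1) + 1) := by ring
        _ = q * q ^ (c - 1) := by rw [h7]
      have hV : Fintype.card (Fin c → F) = q ^ (c - 1) * q := by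
        rw [Fintype.card_fun, Fintype.card_fin, ← pow_succ, Nat.sub_add_cancel hc]
      calc bad.card ≤ 1 + ((Finset.range k).powersetCard m).card * (q ^ (c - 1) - 1) := hb1
        _ ≤ 1 + q * (q ^ (c - 1) - 1) := Nat.add_le_add_left h5 1
        _ < q * (q ^ (c - 1) - 1) + q := by linarith
        _ = q * q ^ (c - 1) := h6
        _ = Fintype.card (Fin c → F) := by rw [hV, mul_comm]
    obtain ⟨v, hv⟩ : ∃ v, v ∉ bad := by
      by_contra h
      push_neg at h
      have : (Finset.univ : Finset (Fin c → F)).card ≤ bad.card :=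
        Finset.card_le_card (fun x _ => h x)
      rw [Finset.card_univ] at this
      omega
    have hv0 : v ≠ 0 := by
      intro h; exact hv (by simp [hbad, h])
    have hvspan : ∀ X : Finset ℕ, X ⊆ Finset.range k → X.card ≤ c - 1 →
        v ∉ Submodule.span F (φ '' (↑X : Set ℕ)) := by
      intro X hXsub hXcard hvmem
      have hmk : m ≤ (Finset.range k).card := by simp [hm]
      obtain ⟨Y, hXY, hYsub, hYcard⟩ :=
        Finset.exists_subsuperset_card_eq hXsub (le_min hXcard
          (le_trans (Finset.card_le_card hXsub) (by simp))) hmk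
      have hvY : v ∈ Submodule.span F (φ '' (↑Y : Set ℕ)) :=
        Submodule.span_mono (Set.image_mono (by exact_mod_cast hXY)) hvmem
      apply hv
      rw [hbad]
      apply Finset.mem_union_right
      apply Finset.mem_biUnion.mpr
      exact ⟨Y, Finset.mem_powersetCard.mpr ⟨hYsub, hYcard⟩,
        Finset.mem_erase.mpr ⟨hv0, by simp [hvY]⟩⟩
    refine ⟨Function.update φ k v, ?_⟩
    intro X hXsub hXcard
    by_cases hkX : k ∈ X
    · set X' := X.erase k with hX'
      have hkX' : k ∉ X' := Finset.notMem_erase _ _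
      have hX'sub : X' ⊆ Finset.range k := by
        intro x hx
        have h1 := hXsub (Finset.mem_of_mem_erase hx)
        have h2 : x ≠ k := Finset.ne_of_mem_erase hx
        simp only [Finset.mem_range] at h1 ⊢
        omega
      have hX'card : X'.card ≤ c - 1 := by
        rw [hX', Finset.card_erase_of_mem hkX]
        omega
      have hXeq : X = insert k X' := (Finset.insert_erase hkX).symm
      have hupd : ∀ x ∈ X', Function.update φ k v x = φ x := fun x hx =>
        Function.update_of_ne (Finset.ne_of_mem_erase hx) _ _
      have hLIX' : LinearIndependent F (fun x : X' => φ ↑x) :=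
        hφ X' hX'sub (le_trans hX'card (Nat.sub_le c 1))
      have hrange : Set.range (fun x : X' => φ ↑x) = φ '' (↑X' : Set ℕ) := by
        ext y; constructor
        · rintro ⟨⟨x, hx⟩, rfl⟩; exact ⟨x, hx, rfl⟩
        · rintro ⟨x, hx, rfl⟩; exact ⟨⟨x, hx⟩, rfl⟩
      have hvnot : v ∉ Submodule.span F (Set.range (fun x : X' => φ ↑x)) := by
        rw [hrange]; exact hvspan X' hX'sub hX'card
      have hopt := hLIX'.option (x := v) hvnot
      have hcomp : (fun o : Option X' => Option.casesOn' o v (fun x : X' => φ ↑x)) ∘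
          (Finset.subtypeInsertEquivOption hkX') =
          fun i : (insert k X' : Finset ℕ) => Function.update φ k v ↑i := by
        funext i
        rcases i with ⟨x, hx⟩
        by_cases hxk : x = k
        · subst hxk
          simp [Finset.subtypeInsertEquivOption, Option.casesOn', Function.update_self]
        · simp [Finset.subtypeInsertEquivOption, hxk, Option.casesOn',
            Function.update_of_ne hxk]
      rw [hXeq]
      exact (linearIndependent_equiv' (Finset.subtypeInsertEquivOption hkX') hcomp).mpr hopt
    · -- k ∉ X : X ⊆ range k and update doesn't matter
      have hXk : X ⊆ Finset.range k := by
        intro x hx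
        have := hXsub hx
        simp only [Finset.mem_range] at this ⊢
        rcases Nat.lt_succ_iff_lt_or_eq.mp this with h | h
        · exact h
        · exact absurd (h ▸ hx) hkX
      have : (fun i : X => Function.update φ k v i) = fun i : X => φ i := by
        funext i
        exact Function.update_of_ne (by rintro rfl; exact hkX i.2) _ _
      rw [this]
      exact hφ X hXk hXcard

/-- Let `F` be a finite field and `c, d` natural numbers with `c ≤ d`
and `|F| ≥ C(d−1, c−1)`. Then the uniform matroid `U_{c,d}` is representable over `F`:
there exist vectors `φ₁, …, φ_d ∈ F^c` such that for every subset `X ⊆ {1, …, d}`, the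
family `(φ_i)_{i ∈ X}` is linearly independent over `F` iff `|X| ≤ c`. -/
theorem uniform_matroid_representable
    (F : Type*) [Field F] [Fintype F]
    (c d : ℕ) (hcd : c ≤ d)
    (hF : Nat.choose (d - 1) (c - 1) ≤ Fintype.card F) :
    ∃ φ : Fin d → (Fin c → F), ∀ X : Finset (Fin d),
        LinearIndependent F (fun i : X => φ i.1) ↔ X.card ≤ c := by
  classical
  rcases Nat.eq_zero_or_pos c with hc0 | hc
  · subst hc0
    refine ⟨fun _ => 0, fun X => ?_⟩
    constructor
    · intro h
      by_contra hne
      push_neg at hne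
      have hpos : 0 < X.card := by omega
      obtain ⟨i, hi⟩ := Finset.card_pos.mp hpos
      exact (h.ne_zero ⟨i, hi⟩) (Subsingleton.elim _ _)
    · intro h
      have hXe : X = ∅ := Finset.card_eq_zero.mp (Nat.le_zero.mp h)
      subst hXe
      haveI : IsEmpty ((∅ : Finset (Fin d)) : Type) := by
        constructor; rintro ⟨x, hx⟩; simp at hx
      exact linearIndependent_empty_type
  obtain ⟨φ, hφ⟩ := uniform_greedy F c d hc hcd hF d le_rfl
  refine ⟨fun i => φ i.1, fun X => ?_⟩
  constructor
  · intro h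
    have h1 := h.fintype_card_le_finrank
    rwa [Fintype.card_coe, Module.finrank_fin_fun] at h1
  · intro hXc
    set Y : Finset ℕ := X.map ⟨Fin.val, Fin.val_injective⟩ with hY
    have hYsub : Y ⊆ Finset.range d := by
      intro x hx
      simp only [hY, Finset.mem_map, Function.Embedding.coeFn_mk] at hx
      obtain ⟨i, _, rfl⟩ := hx
      simp [i.isLt]
    have hLI : LinearIndependent F (fun j : Y => φ j) :=
      hφ Y hYsub (by rwa [hY, Finset.card_map])
    have hset : Fin.val '' (↑X : Set (Fin d)) = (↑Y : Set ℕ) := by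
      simp [hY]
    have hLI' : LinearIndependent F (fun j : (Fin.val '' (↑X : Set (Fin d))) => φ ↑j) := by
      rw [hset]; exact hLI
    exact (linearIndependent_equiv
      (Equiv.Set.image Fin.val (↑X : Set (Fin d)) Fin.val_injective)).mpr hLI'
end
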